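/- arXiv:2305.18536 — 2 statements merged into one kernel-verified Lean document; each statement's English description precedes it below -/
import Mathlib

section
/- Let n ≥ 2 and 2 ≤ k ≤ n−1. Suppose (d, m_1, …, m_{n+3}) ∈ ℝ^{1+(n+3)} satisfies m_j ≤ d for all j, and κ_{I,t} ≤ 0 for every integer t with 0 ≤ t ≤ n/2 and every subset I of size n − 2t − k + 1 (when n − 2t − k + 1 ≥ 0). Then κ_{I',t} ≤ 0 for every 0 ≤ t ≤ n/2 and every subset I' of size n − 2t − (k−1) + 1. -/
/-- The base-locus multiplicity `κ_{I,t}` of the join `J(L_I, σ_t)` for a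
divisor `(d, m)` on the blow-up of ℙ^n at `n+3` points. -/
noncomputable def kappa (n : ℕ) (I : Finset (Fin (n + 3))) (t : ℕ)
    (d : ℝ) (m : Fin (n + 3) → ℝ) : ℝ :=
  -(((I.card : ℝ) + ((n : ℝ) + 1) * t - 1)) * d
    + ∑ i ∈ I, ((t : ℝ) + 1) * m i + ∑ i ∈ Iᶜ, (t : ℝ) * m i

lemma kappa_eq (n : ℕ) (I : Finset (Fin (n + 3))) (t : ℕ) (d : ℝ)
    (m : Fin (n + 3) → ℝ) :
    kappa n I t d m = -(((I.card : ℝ) + ((n : ℝ) + 1) * t - 1)) * d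
      + (t : ℝ) * (∑ i, m i) + ∑ i ∈ I, m i := by
  unfold kappa
  have h1 : ∑ i ∈ I, ((t : ℝ) + 1) * m i
      = ∑ i ∈ I, (t : ℝ) * m i + ∑ i ∈ I, m i := by
    rw [← Finset.sum_add_distrib]
    exact Finset.sum_congr rfl fun i _ => by ring
  have h2 : ∑ i ∈ I, (t : ℝ) * m i + ∑ i ∈ Iᶜ, (t : ℝ) * m i
      = (t : ℝ) * ∑ i, m i := by
    rw [Finset.sum_add_sum_compl, Finset.mul_sum]
  linarith

/-- The inequalities (III_k) imply the inequalities (III_{k−1}) under the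
effectivity condition `m_j ≤ d`. -/
theorem stmt_11 (n k : ℕ) (hn : 2 ≤ n) (hk : 2 ≤ k) (hk' : k ≤ n - 1)
    (d : ℝ) (m : Fin (n + 3) → ℝ) (hm : ∀ j, m j ≤ d)
    (hIII : ∀ t : ℕ, 2 * t ≤ n → ∀ I : Finset (Fin (n + 3)),
      (I.card : ℤ) = (n : ℤ) - 2 * t - k + 1 → kappa n I t d m ≤ 0) :
    ∀ t : ℕ, 2 * t ≤ n → ∀ I' : Finset (Fin (n + 3)),
      (I'.card : ℤ) = (n : ℤ) - 2 * t - (k - 1) + 1 →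
        kappa n I' t d m ≤ 0 := by
  intro t ht I' hcard
  rcases Finset.eq_empty_or_nonempty I' with hI | ⟨i, hi⟩
  · -- empty case: 2t = n - k + 2, so t ≥ 2; use singletons at t-1
    subst hI
    simp only [Finset.card_empty, Nat.cast_zero] at hcard
    have hkn : (k : ℤ) ≤ (n : ℤ) - 1 := by omega
    have ht2 : 2 ≤ t := by omega
    have ht1 : 2 * (t - 1) ≤ n := by omega
    set S : ℝ := ∑ i, m i with hS
    have hcast : ((t - 1 : ℕ) : ℝ) = (t : ℝ) - 1 := by
      have : 1 ≤ t := by omega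
      push_cast [this]; ring
    have hsing : ∀ i : Fin (n + 3), kappa n {i} (t - 1) d m
        = -(((n : ℝ) + 1) * ((t : ℝ) - 1)) * d + ((t : ℝ) - 1) * S + m i := by
      intro i
      rw [kappa_eq, hcast]
      simp only [Finset.card_singleton, Nat.cast_one, Finset.sum_singleton]
      ring
    have hle : ∀ i : Fin (n + 3), kappa n {i} (t - 1) d m ≤ 0 := by
      intro i
      refine hIII (t - 1) ht1 {i} ?_
      have : ((t - 1 : ℕ) : ℤ) = (t : ℤ) - 1 := by omega
      simp only [Finset.card_singleton, Nat.cast_one, this]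
      omega
    have hsum : ∑ i : Fin (n + 3), kappa n {i} (t - 1) d m ≤ 0 :=
      Finset.sum_nonpos fun i _ => hle i
    have htot : ∑ i : Fin (n + 3), kappa n {i} (t - 1) d m
        = ((n : ℝ) + 3) * (-(((n : ℝ) + 1) * ((t : ℝ) - 1)) * d
            + ((t : ℝ) - 1) * S) + S := by
      rw [Finset.sum_congr rfl fun i _ => hsing i]
      rw [Finset.sum_add_distrib, Finset.sum_const, Finset.card_univ,
        Fintype.card_fin, ← hS]
      push_cast
      ring
    have hA : ((n : ℝ) + 3) * (-(((n : ℝ) + 1) * ((t : ℝ) - 1)) * d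
        + ((t : ℝ) - 1) * S) + S ≤ 0 := htot ▸ hsum
    have hB : S ≤ ((n : ℝ) + 3) * d := by
      have h := Finset.sum_le_sum (fun i (_ : i ∈ Finset.univ) => hm i)
      rw [Finset.sum_const, Finset.card_univ, Fintype.card_fin] at h
      rw [hS]
      calc (∑ i, m i) ≤ (n + 3) • d := h
        _ = ((n : ℝ) + 3) * d := by push_cast [nsmul_eq_mul]; ring
    have htR : (2 : ℝ) ≤ (t : ℝ) := by exact_mod_cast ht2
    have htn : 2 * (t : ℝ) ≤ (n : ℝ) := by exact_mod_cast ht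
    rw [kappa_eq]
    simp only [Finset.card_empty, Nat.cast_zero, Finset.sum_empty, add_zero]
    set G : ℝ := -((0 : ℝ) + ((n : ℝ) + 1) * (t : ℝ) - 1) * d + (t : ℝ) * S
      with hG
    have key : ((n : ℝ) + 3) * (2 * (t : ℝ) - 1) * G
        = (2 * (t : ℝ) + 1) * (((n : ℝ) + 3)
              * (-(((n : ℝ) + 1) * ((t : ℝ) - 1)) * d + ((t : ℝ) - 1) * S) + S)
          + ((n : ℝ) + 2 - 2 * (t : ℝ)) * (S - ((n : ℝ) + 3) * d) := by
      rw [hG]; ring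
    have h1 : (2 * (t : ℝ) + 1) * (((n : ℝ) + 3)
        * (-(((n : ℝ) + 1) * ((t : ℝ) - 1)) * d + ((t : ℝ) - 1) * S) + S) ≤ 0 :=
      mul_nonpos_of_nonneg_of_nonpos (by linarith) hA
    have h2 : ((n : ℝ) + 2 - 2 * (t : ℝ)) * (S - ((n : ℝ) + 3) * d) ≤ 0 :=
      mul_nonpos_of_nonneg_of_nonpos (by linarith) (by linarith)
    have hc : (0 : ℝ) < ((n : ℝ) + 3) * (2 * (t : ℝ) - 1) := by
      have h0 : (0 : ℝ) ≤ (n : ℝ) := Nat.cast_nonneg n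
      nlinarith
    have hfin : ((n : ℝ) + 3) * (2 * (t : ℝ) - 1) * G
        ≤ ((n : ℝ) + 3) * (2 * (t : ℝ) - 1) * 0 := by
      rw [mul_zero, key]; linarith
    exact le_of_mul_le_mul_left hfin hc
  · -- nonempty case: erase a point
    have hcard1 : 1 ≤ I'.card := Finset.card_pos.mpr ⟨i, hi⟩
    have hcardE : ((I'.erase i).card : ℤ) = (n : ℤ) - 2 * t - k + 1 := by
      rw [Finset.card_erase_of_mem hi]
      have : ((I'.card - 1 : ℕ) : ℤ) = (I'.card : ℤ) - 1 := by omega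
      rw [this]; omega
    have h := hIII t ht (I'.erase i) hcardE
    have heq : kappa n I' t d m = kappa n (I'.erase i) t d m + (m i - d) := by
      rw [kappa_eq, kappa_eq, Finset.card_erase_of_mem hi,
        Finset.sum_erase_eq_sub hi]
      have : ((I'.card - 1 : ℕ) : ℝ) = (I'.card : ℝ) - 1 := by
        push_cast [hcard1]; ring
      rw [this]; ring
    have := hm i
    linarith
end

section
/- Let n ≥ 2, s = n+3, t ≥ 1, and 1 ≤ r = n − 2t − k + 1 for some 1 ≤ k ≤ n−1. Let I = {1, …, r}, I' = {1, …, r+2}, and Γ = {1, …, r} ∪ {r+3, …, n+3} (so |Γ| = n+1). Then the Cremona action satisfies Cr_Γ(c_{I,t}) = c_{I',t−1}, where c_{J,u} = ((|J| + (n+1)u − 1), μ_1, …, μ_{n+3}) with μ_i = u+1 for i ∈ J and μ_i = u for i ∉ J, and Cr_Γ(δ, μ_1, …, μ_s) = (δ − (n−1)a, μ'), a = Σ_{j∈Γ} μ_j − δ, μ'_j = μ_j − a for j ∈ Γ, μ'_i = μ_i otherwise. -/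
/-- The Cremona action on curve classes `(δ, μ) ∈ ℝ × ℝ^s`. -/
noncomputable def cremona (n s : ℕ) (Γ : Finset (Fin s))
    (c : ℝ × (Fin s → ℝ)) : ℝ × (Fin s → ℝ) :=
  let a : ℝ := (∑ j ∈ Γ, c.2 j) - c.1
  (c.1 - ((n : ℝ) - 1) * a, fun i => if i ∈ Γ then c.2 i - a else c.2 i)

/-- The curve class `c_{J,u}` on the blow-up of ℙ^n at `n+3` points. -/
noncomputable def curveClass (n : ℕ) (J : Finset (Fin (n + 3))) (u : ℕ) :
    ℝ × (Fin (n + 3) → ℝ) :=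
  ((J.card : ℝ) + ((n : ℝ) + 1) * u - 1,
   fun i => if i ∈ J then (u : ℝ) + 1 else (u : ℝ))

lemma card_filter_lt (m r : ℕ) (h : r ≤ m) :
    (Finset.univ.filter (fun i : Fin m => (i : ℕ) < r)).card = r := by
  rcases Nat.lt_or_ge r m with h' | h'
  · have : (Finset.univ.filter (fun i : Fin m => (i : ℕ) < r)) = Finset.Iio ⟨r, h'⟩ := by
      ext i; simp [Fin.lt_def]
    rw [this, Fin.card_Iio]
  · have hrm : r = m := le_antisymm h h'
    subst hrm
    have : (Finset.univ.filter (fun i : Fin r => (i : ℕ) < r)) = Finset.univ := by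
      ext i; simp [i.isLt]
    rw [this]; simp

/-- The inductive step: `Cr_Γ(c_{I,t}) = c_{I',t−1}` where, in 1-based
notation, `I = {1,…,r}`, `I' = {1,…,r+2}` and `Γ = {1,…,r} ∪ {r+3,…,n+3}`
(here realised 0-based in `Fin (n+3)`). -/
theorem stmt_12 (n t k r : ℕ) (hn : 2 ≤ n) (ht : 1 ≤ t)
    (hk : 1 ≤ k) (hk' : k ≤ n - 1) (hr : 1 ≤ r)
    (hrdef : (r : ℤ) = (n : ℤ) - 2 * t - k + 1)
    (I I' Γ : Finset (Fin (n + 3)))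
    (hI : I = Finset.univ.filter (fun i : Fin (n + 3) => (i : ℕ) < r))
    (hI' : I' = Finset.univ.filter (fun i : Fin (n + 3) => (i : ℕ) < r + 2))
    (hΓ : Γ = Finset.univ.filter (fun i : Fin (n + 3) => (i : ℕ) < r ∨ r + 2 ≤ (i : ℕ))) :
    cremona n (n + 3) Γ (curveClass n I t) = curveClass n I' (t - 1) := by
  have hrn : r + 2 ≤ n := by omega
  have hIcard : I.card = r := by rw [hI]; exact card_filter_lt _ _ (by omega)
  have hI'card : I'.card = r + 2 := by rw [hI']; exact card_filter_lt _ _ (by omega)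
  have hfilter : Γ.filter (fun j => j ∈ I) = I := by
    subst hI hΓ
    ext i
    simp only [Finset.mem_filter, Finset.mem_univ, true_and]
    omega
  have hΓcard : Γ.card = n + 1 := by
    have h2 : (Finset.univ.filter (fun i : Fin (n + 3) =>
        ¬((i : ℕ) < r ∨ r + 2 ≤ (i : ℕ)))) =
        {(⟨r, by omega⟩ : Fin (n + 3)), ⟨r + 1, by omega⟩} := by
      ext i
      simp only [Finset.mem_filter, Finset.mem_univ, true_and, Finset.mem_insert,
        Finset.mem_singleton, Fin.ext_iff]
      omega
    have hh := Finset.card_filter_add_card_filter_not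
      (s := (Finset.univ : Finset (Fin (n + 3))))
      (p := fun i : Fin (n + 3) => (i : ℕ) < r ∨ r + 2 ≤ (i : ℕ))
    rw [h2, ← hΓ] at hh
    have hne : (⟨r, by omega⟩ : Fin (n + 3)) ≠ ⟨r + 1, by omega⟩ := by
      simp [Fin.ext_iff]
    rw [Finset.card_insert_of_notMem (by simp [hne]), Finset.card_singleton,
      Finset.card_univ, Fintype.card_fin] at hh
    omega
  have hsum : (∑ j ∈ Γ, (if j ∈ I then (t : ℝ) + 1 else (t : ℝ)))
      = (r : ℝ) + ((n : ℝ) + 1) * t := by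
    have he : ∀ j, (if j ∈ I then (t : ℝ) + 1 else (t : ℝ))
        = (if j ∈ I then (1 : ℝ) else 0) + t := by
      intro j; split_ifs <;> ring
    simp_rw [he]
    rw [Finset.sum_add_distrib, Finset.sum_boole, Finset.sum_const, hfilter, hIcard, hΓcard]
    push_cast
    ring
  have htc : ((t - 1 : ℕ) : ℝ) = (t : ℝ) - 1 := by
    have := Nat.cast_sub ht (R := ℝ); simpa using this
  simp only [cremona, curveClass]
  rw [hsum, hIcard, hI'card, htc]
  refine Prod.ext ?_ ?_
  · push_cast; ring
  · funext i
    dsimp only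
    have hiΓ : i ∈ Γ ↔ ((i : ℕ) < r ∨ r + 2 ≤ (i : ℕ)) := by rw [hΓ]; simp
    have hiI : i ∈ I ↔ (i : ℕ) < r := by rw [hI]; simp
    have hiI' : i ∈ I' ↔ (i : ℕ) < r + 2 := by rw [hI']; simp
    by_cases h1 : (i : ℕ) < r
    · rw [if_pos (hiΓ.2 (Or.inl h1)), if_pos (hiI.2 h1), if_pos (hiI'.2 (by omega))]
      ring
    · by_cases h2 : (i : ℕ) < r + 2
      · rw [if_neg (by rw [hiΓ]; omega), if_neg (by rw [hiI]; omega), if_pos (hiI'.2 h2)]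
        ring
      · rw [if_pos (hiΓ.2 (Or.inr (by omega))), if_neg (by rw [hiI]; omega),
          if_neg (by rw [hiI']; omega)]
        ring
end
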